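/- Let η be a nondegenerate alternating bilinear map V × V → V' and ρ the induced semiform on Y = V' × V. Let F : Y → Y be given by F([v,u]) = [ψ₁(v) + ψ₂(u) + v₀, φ(u) + u₀], where ψ₁ : V' → V' and φ : V → V are linear bijections, ψ₂ : V → V' is linear, v₀ ∈ V', u₀ ∈ V, and suppose (a) ψ₂(u) = η(φ(u), u₀) for all u ∈ V, and (b) η(φ(u₁), φ(u₂)) = ψ₁(η(u₁,u₂)) for all u₁,u₂ ∈ V. Then ρ(F(p₁), F(p₂)) = ψ₁(ρ(p₁,p₂)) for all p₁, p₂ ∈ Y; in particular F preserves the relation ρ(p₁,p₂) = 0. -/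

import Mathlib

/-!
The map `T` is affine with linear part `(v, u) ↦ (ψ₁ v + ψ₂ u, φ u)`. Expanding
`η (φ u₁ + u₀) (φ u₂ + u₀)` by bilinearity, the term `η u₀ u₀` vanishes, `η (φ u₁) (φ u₂)`
becomes `ψ₁ (η u₁ u₂)` by (b), and by (a) the cross terms `η (φ u₁) u₀ + η u₀ (φ u₂)` are
cancelled by `ψ₂ u₁ - ψ₂ u₂` coming from the first coordinates, using that `η` is skew.
-/

namespace LinearMap

variable {R V V' : Type*} [CommRing R] [AddCommGroup V] [Module R V]
  [AddCommGroup V'] [Module R V']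

def semiform (η : V →ₗ[R] V →ₗ[R] V') (p q : V' × V) : V' :=
  η p.2 q.2 - (p.1 - q.1)

theorem semiform_affine_apply {η : V →ₗ[R] V →ₗ[R] V'} (hη : η.IsAlt)
    (ψ₁ : V' →ₗ[R] V') (φ : V →ₗ[R] V) (ψ₂ : V →ₗ[R] V') (v₀ : V') (u₀ : V)
    (ha : ∀ u, ψ₂ u = η (φ u) u₀) (hb : ∀ u₁ u₂, η (φ u₁) (φ u₂) = ψ₁ (η u₁ u₂))
    (p q : V' × V) :
    semiform η (ψ₁ p.1 + ψ₂ p.2 + v₀, φ p.2 + u₀) (ψ₁ q.1 + ψ₂ q.2 + v₀, φ q.2 + u₀) =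
      ψ₁ (semiform η p q) := by
  simp only [semiform, map_add, add_apply, map_sub, hη.self_eq_zero, hb, ha,
    ← hη.neg (φ q.2) u₀]
  abel

end LinearMap

theorem stmt17_general {F V V' : Type*} [Field F] [AddCommGroup V] [Module F V]
    [AddCommGroup V'] [Module F V']
    (η : V →ₗ[F] V →ₗ[F] V') (halt : ∀ u : V, η u u = 0)
    (ρ : (V' × V) → (V' × V) → V')
    (hρ : ∀ p q : V' × V, ρ p q = η p.2 q.2 - (p.1 - q.1))
    (ψ₁ : V' →ₗ[F] V')
    (φ : V →ₗ[F] V)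
    (ψ₂ : V →ₗ[F] V') (v₀ : V') (u₀ : V)
    (T : (V' × V) → (V' × V))
    (hT : ∀ (v : V') (u : V), T (v, u) = (ψ₁ v + ψ₂ u + v₀, φ u + u₀))
    (ha : ∀ u : V, ψ₂ u = η (φ u) u₀)
    (hb : ∀ u₁ u₂ : V, η (φ u₁) (φ u₂) = ψ₁ (η u₁ u₂)) :
    (∀ p₁ p₂ : V' × V, ρ (T p₁) (T p₂) = ψ₁ (ρ p₁ p₂)) ∧
    (∀ p₁ p₂ : V' × V, ρ p₁ p₂ = 0 → ρ (T p₁) (T p₂) = 0) := by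
  have hρ' : ρ = LinearMap.semiform η := funext₂ hρ
  have hT' : ∀ p, T p = (ψ₁ p.1 + ψ₂ p.2 + v₀, φ p.2 + u₀) := fun p => hT p.1 p.2
  have hmain : ∀ p₁ p₂, ρ (T p₁) (T p₂) = ψ₁ (ρ p₁ p₂) := fun p₁ p₂ => by
    rw [hρ', hT', hT']
    exact LinearMap.semiform_affine_apply halt ψ₁ φ ψ₂ v₀ u₀ ha hb p₁ p₂
  refine ⟨hmain, fun p₁ p₂ h0 => ?_⟩
  rw [hmain, h0, map_zero]

theorem stmt17 {F V V' : Type*} [Field F] [AddCommGroup V] [Module F V]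
    [AddCommGroup V'] [Module F V']
    (h2 : (2 : F) ≠ 0) (η : V →ₗ[F] V →ₗ[F] V') (halt : ∀ u : V, η u u = 0)
    (hnd : ∀ u : V, u ≠ 0 → ∃ y : V, η u y ≠ 0)
    (ρ : (V' × V) → (V' × V) → V')
    (hρ : ∀ p q : V' × V, ρ p q = η p.2 q.2 - (p.1 - q.1))
    (ψ₁ : V' →ₗ[F] V') (hψ₁ : Function.Bijective ψ₁)
    (φ : V →ₗ[F] V) (hφ : Function.Bijective φ)
    (ψ₂ : V →ₗ[F] V') (v₀ : V') (u₀ : V)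
    (T : (V' × V) → (V' × V))
    (hT : ∀ (v : V') (u : V), T (v, u) = (ψ₁ v + ψ₂ u + v₀, φ u + u₀))
    (ha : ∀ u : V, ψ₂ u = η (φ u) u₀)
    (hb : ∀ u₁ u₂ : V, η (φ u₁) (φ u₂) = ψ₁ (η u₁ u₂)) :
    (∀ p₁ p₂ : V' × V, ρ (T p₁) (T p₂) = ψ₁ (ρ p₁ p₂)) ∧
    (∀ p₁ p₂ : V' × V, ρ p₁ p₂ = 0 → ρ (T p₁) (T p₂) = 0) :=
  stmt17_general η halt ρ hρ ψ₁ φ ψ₂ v₀ u₀ T hT ha hb
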